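/- Let β ≥ 0, let B(β) be the 4×4 real matrix with rows (1,0,0,1), (0,1,−1,0), (0,−1,−2β−2,0), (1,0,0,β+1), and let J be the standard 4×4 symplectic matrix with block form rows (0, −I₂), (I₂, 0). Then the characteristic polynomial of J·B(β) is λ⁴ + (1−β)λ² − β(2β+3). Moreover, if β > 0, the set of complex roots of this polynomial is exactly {√α₁, −√α₁, i·θ(β), −i·θ(β)}, where α₁ = (β−1+√(9β²+10β+1))/2 > 0 and θ(β) = √((1−β+√(9β²+10β+1))/2) > 0. -/

import Mathlib

/-!
The characteristic polynomial is a direct Laplace expansion. The quartic is a quadratic in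
`λ²` whose roots are `α₁ > 0` and `-θ(β)² < 0`: writing `s = √(9β² + 10β + 1)`, one has
`θ² - α₁ = 1 - β` and `α₁ θ² = (s² - (β - 1)²) / 4 = β(2β + 3)`, which for `β > 0` forces
`s > |β - 1|`, i.e. `α₁ > 0` and `θ² > 0`. So the quartic factors as `(λ² - α₁)(λ² + θ²)` over `ℂ`.
-/

open Polynomial

theorem charpoly_symplectic_mul_eulerCircular (β : ℝ) :
    Matrix.charpoly
        ((!![(0 : ℝ), 0, -1, 0; 0, 0, 0, -1; 1, 0, 0, 0; 0, 1, 0, 0]) *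
          (!![(1 : ℝ), 0, 0, 1; 0, 1, -1, 0; 0, -1, -2 * β - 2, 0; 1, 0, 0, β + 1]))
      = X ^ 4 + C (1 - β) * X ^ 2 - C (β * (2 * β + 3)) := by
  simp [Matrix.charpoly, Matrix.det_succ_row_zero, Fin.sum_univ_succ, Fin.succAbove,
    Matrix.charmatrix_apply, C_ofNat]
  ring

theorem Complex.setOf_biquadratic_eq_zero {p q u v : ℝ} (hu : 0 ≤ u) (hv : 0 ≤ v)
    (hp : v - u = p) (hq : u * v = q) :
    {z : ℂ | z ^ 4 + p * z ^ 2 - q = 0} = {(√u : ℂ), -(√u : ℂ), I * √v, -(I * √v)} := by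
  have hu' : ((√u : ℝ) : ℂ) ^ 2 = u := by exact_mod_cast Real.sq_sqrt hu
  have hv' : ((√v : ℝ) : ℂ) ^ 2 = v := by exact_mod_cast Real.sq_sqrt hv
  have factor (z : ℂ) :
      z ^ 4 + p * z ^ 2 - q = (z - √u) * (z + √u) * (z - I * √v) * (z + I * √v) := by
    rw [← hp, ← hq]
    push_cast
    linear_combination (z ^ 2 + v) * hu' - (z ^ 2 - (√u : ℂ) ^ 2) * hv' +
      (z ^ 2 - (√u : ℂ) ^ 2) * (√v : ℂ) ^ 2 * I_sq
  ext z
  simp only [Set.mem_ofPred_eq, factor, Set.mem_insert_iff, Set.mem_singleton_iff, mul_eq_zero,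
    sub_eq_zero, add_eq_zero_iff_eq_neg, or_assoc]

theorem abs_sub_one_lt_sqrt_discr {β : ℝ} (hβ : 0 < β) :
    |β - 1| < √(9 * β ^ 2 + 10 * β + 1) := by
  rw [← Real.sqrt_sq_eq_abs]
  exact Real.sqrt_lt_sqrt (sq_nonneg _) (by nlinarith)

theorem half_add_sqrt_discr_mul_half_sub {β : ℝ} (hβ : 0 ≤ β) :
    (β - 1 + √(9 * β ^ 2 + 10 * β + 1)) / 2 * ((1 - β + √(9 * β ^ 2 + 10 * β + 1)) / 2) =
      β * (2 * β + 3) := by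
  have hs := Real.sq_sqrt (show 0 ≤ 9 * β ^ 2 + 10 * β + 1 by positivity)
  linear_combination hs / 4

theorem euler_circular_charpoly_and_roots (β : ℝ) :
    (Matrix.charpoly
        ((!![(0 : ℝ), 0, -1, 0; 0, 0, 0, -1; 1, 0, 0, 0; 0, 1, 0, 0]) *
          (!![(1 : ℝ), 0, 0, 1; 0, 1, -1, 0; 0, -1, -2 * β - 2, 0; 1, 0, 0, β + 1]))
      = X ^ 4 + C (1 - β) * X ^ 2 - C (β * (2 * β + 3))) ∧
    (0 < β →
      0 < (β - 1 + Real.sqrt (9 * β ^ 2 + 10 * β + 1)) / 2 ∧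
      0 < Real.sqrt ((1 - β + Real.sqrt (9 * β ^ 2 + 10 * β + 1)) / 2) ∧
      {z : ℂ | z ^ 4 + (1 - (β : ℂ)) * z ^ 2 - (β : ℂ) * (2 * (β : ℂ) + 3) = 0} =
        {((Real.sqrt ((β - 1 + Real.sqrt (9 * β ^ 2 + 10 * β + 1)) / 2) : ℝ) : ℂ),
         -((Real.sqrt ((β - 1 + Real.sqrt (9 * β ^ 2 + 10 * β + 1)) / 2) : ℝ) : ℂ),
         Complex.I * ((Real.sqrt ((1 - β + Real.sqrt (9 * β ^ 2 + 10 * β + 1)) / 2) : ℝ) : ℂ),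
         -(Complex.I * ((Real.sqrt ((1 - β + Real.sqrt (9 * β ^ 2 + 10 * β + 1)) / 2) : ℝ) : ℂ))}) := by
  refine ⟨charpoly_symplectic_mul_eulerCircular β, fun hβ => ?_⟩
  obtain ⟨hα, hθ⟩ := abs_lt.1 (abs_sub_one_lt_sqrt_discr hβ)
  refine ⟨by linarith, Real.sqrt_pos.2 (by linarith), ?_⟩
  have roots := Complex.setOf_biquadratic_eq_zero (p := 1 - β) (by linarith) (by linarith)
    (by ring) (half_add_sqrt_discr_mul_half_sub hβ.le)
  push_cast at roots
  exact roots
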